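/- The rewriting relation of the conditional-swap transducer is strongly normalizing on configurations, and for every input tree t the configuration q0⟨t⟩ has a unique normal form, namely emb(f t): if q0⟨t⟩ →* d and d admits no further rewriting step, then d = emb(f t). -/

import Mathlib

/-- Trees over the ranked alphabet {a:2, b:1, c:0}. -/
inductive T : Type
  | a : T → T → T
  | b : T → T
  | c : T

/-- The conditional-swap function. -/
def f : T → T
  | T.a t u => T.a (f u) (f t)
  | T.b t => T.b t
  | T.c => T.c

/-- Configurations of the conditional-swap top-down tree transducer. -/
inductive C : Type
  | a : C → C → C
  | b : C → C
  | c : C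
  | Q0 : T → C
  | Q1 : T → C

/-- The embedding of pure output trees into configurations. -/
def emb : T → C
  | T.a t u => C.a (emb t) (emb u)
  | T.b t => C.b (emb t)
  | T.c => C.c

/-- One-step rewriting: congruence closure (w.r.t. the constructors `a` and `b`
of `C`) of the transducer rules. -/
inductive Step : C → C → Prop
  | q0a (t u : T) : Step (C.Q0 (T.a t u)) (C.a (C.Q0 u) (C.Q0 t))
  | q1a (t u : T) : Step (C.Q1 (T.a t u)) (C.a (C.Q1 t) (C.Q1 u))
  | q0b (t : T) : Step (C.Q0 (T.b t)) (C.b (C.Q1 t))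
  | q1b (t : T) : Step (C.Q1 (T.b t)) (C.b (C.Q1 t))
  | q0c : Step (C.Q0 T.c) C.c
  | q1c : Step (C.Q1 T.c) C.c
  | congL {d d' : C} (e : C) : Step d d' → Step (C.a d e) (C.a d' e)
  | congR (d : C) {e e' : C} : Step e e' → Step (C.a d e) (C.a d e')
  | congB {d d' : C} : Step d d' → Step (C.b d) (C.b d')

/-!
Give every input tree `t` a size, and weigh a configuration by counting its output constructors
`a`, `b` once and each state node `Qᵢ⟨t⟩` with twice the size of `t`: every rule replaces a state
node of weight `2·size t` by at most one output constructor plus state nodes on the proper subtrees,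
so every step strictly lowers the weight.

For uniqueness of the normal form, read a configuration as the tree it denotes, with `Q0⟨t⟩` standing
for `f t` and `Q1⟨t⟩` for `t`; the rules are the defining equations of `f` (and of the identity),
so this value is invariant under steps. A normal form contains no state node, hence is the
embedding of its value.
-/

def T.size : T → ℕ
  | T.a t u => t.size + u.size + 1
  | T.b t => t.size + 1
  | T.c => 1

def C.weight : C → ℕ
  | C.a d e => d.weight + e.weight + 1
  | C.b d => d.weight + 1
  | C.c => 0
  | C.Q0 t => 2 * t.size
  | C.Q1 t => 2 * t.size

def C.eval : C → T
  | C.a d e => T.a d.eval e.eval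
  | C.b d => T.b d.eval
  | C.c => T.c
  | C.Q0 t => f t
  | C.Q1 t => t

namespace Step

theorem weight_lt {d e : C} (h : Step d e) : e.weight < d.weight := by
  induction h <;> simp only [C.weight, T.size] <;> omega

theorem eval_eq {d e : C} (h : Step d e) : e.eval = d.eval := by
  induction h <;> simp_all [C.eval, f]

theorem wellFounded_flip : WellFounded fun d e : C => Step e d :=
  Subrelation.wf weight_lt (measure C.weight).wf

end Step

theorem C.eval_eq_of_reflTransGen {d e : C} (h : Relation.ReflTransGen Step d e) :
    e.eval = d.eval := by
  induction h with
  | refl => rfl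
  | tail _ hstep ih => rw [hstep.eval_eq, ih]

theorem C.eq_emb_eval_of_normal {d : C} (h : ∀ e, ¬ Step d e) : d = emb d.eval := by
  induction d with
  | a d e ihd ihe =>
    rw [C.eval, emb, ← ihd fun x hx => h _ (Step.congL _ hx),
      ← ihe fun x hx => h _ (Step.congR _ hx)]
  | b d ihd => rw [C.eval, emb, ← ihd fun x hx => h _ (Step.congB hx)]
  | c => rfl
  | Q0 t => cases t <;> exact (h _ (by constructor)).elim
  | Q1 t => cases t <;> exact (h _ (by constructor)).elim

/-- The rewriting relation is strongly normalizing (there is no infinite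
sequence of rewriting steps, i.e. the converse relation is well-founded), and
for every input tree `t` the configuration `q0⟨t⟩` has the unique normal form
`emb (f t)`. -/
theorem conditional_swap_SN_and_unique_normal_form :
    (WellFounded fun d e : C => Step e d) ∧
    ∀ (t : T) (d : C), Relation.ReflTransGen Step (C.Q0 t) d →
      (∀ e : C, ¬ Step d e) → d = emb (f t) := by
  refine ⟨Step.wellFounded_flip, fun t d hreach hnormal => ?_⟩
  calc d = emb d.eval := C.eq_emb_eval_of_normal hnormal
    _ = emb (f t) := by rw [C.eval_eq_of_reflTransGen hreach, C.eval]
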